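/- (Lemma 2.8, second part.) Let n ≥ 2 and 2 ≤ k ≤ n. If λ ∈ Γ_{k-1}, then for every index i ∈ {1,…,n} one has σ_{k-2}(λ|i) > 0 and σ_{k-1}(λ|i)·σ_{k-1}(λ) ≥ σ_k(λ)·σ_{k-2}(λ|i); equivalently, σ_{k-1}(λ|i)/σ_{k-2}(λ|i) ≥ σ_k(λ)/σ_{k-1}(λ). -/

import Mathlib

/-- The `k`-th elementary symmetric function of a vector `lam ∈ ℝⁿ`. -/
noncomputable def esymm (n k : ℕ) (lam : Fin n → ℝ) : ℝ :=
  ∑ s ∈ Finset.powersetCard k (Finset.univ : Finset (Fin n)), ∏ i ∈ s, lam i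

/-- The Gårding cone `Γ_k = {λ ∈ ℝⁿ : σ_j(λ) > 0 for all 1 ≤ j ≤ k}`. -/
def GammaCone (n k : ℕ) : Set (Fin n → ℝ) :=
  {lam | ∀ j : ℕ, 1 ≤ j → j ≤ k → 0 < esymm n j lam}

/-!
Writing `σ_j(λ) = σ_j(λ|i) + λ_i σ_{j-1}(λ|i)`, the inequality becomes Newton's inequality
`σ_{k-2}(λ|i) σ_k(λ|i) ≤ σ_{k-1}(λ|i)²`, which holds for every real vector: differentiating,
reversing and differentiating again the real-rooted polynomial `∏ (X + λ_j)` leaves a real-rooted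
quadratic, whose discriminant is nonnegative.

Positivity of `σ_{k-2}(λ|i)` on `Γ_{k-1}` goes by induction on `k`. On `Γ_{m+2}`, `σ_{m+1}(λ|i)`
cannot vanish: otherwise `σ_{m+2}(λ|i) = σ_{m+2}(λ) > 0` and Newton's inequality fails. The cone
is stable under `λ ↦ λ + t (1, …, 1)` for `t ≥ 0`, and for large `t` all entries are nonnegative,
so by continuity `σ_{m+1}(λ|i)` keeps the sign it has there.
-/

open Polynomial

theorem Nat.descFactorial_succ_sq_le (k : ℕ) :
    (k + 1).descFactorial k ^ 2 ≤ 2 * ((k + 2).descFactorial k * k.descFactorial k) := by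
  have h2 := Nat.succ_descFactorial (k + 1) k
  have h1 := Nat.succ_descFactorial k k
  rw [show k + 1 + 1 - k = 2 by omega] at h2
  rw [show k + 1 - k = 1 by omega, one_mul] at h1
  nlinarith [Nat.zero_le (k.descFactorial k * (k + 1).descFactorial k)]

namespace Polynomial

theorem Splits.reverse {K : Type*} [Field K] {p : K[X]} (hp : p.Splits) : p.reverse.Splits := by
  induction hp using Submonoid.closure_induction with
  | mem f hf =>
    refine Splits.of_natDegree_le_one ((reverse_natDegree_le f).trans ?_)
    rcases hf with ⟨a, rfl⟩ | ⟨a, rfl⟩ <;> simp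
  | one => rw [← C_1, reverse_C]; exact Splits.C 1
  | mul f g _ _ hf hg => rw [reverse_mul_of_domain]; exact hf.mul hg

theorem Splits.four_mul_coeff_two_mul_coeff_zero_le {K : Type*} [Field K] [LinearOrder K]
    [IsStrictOrderedRing K] {p : K[X]} (hp : p.Splits) (hdeg : p.natDegree ≤ 2) :
    4 * p.coeff 2 * p.coeff 0 ≤ p.coeff 1 ^ 2 := by
  by_cases h2 : p.coeff 2 = 0
  · rw [h2, mul_zero, zero_mul]
    positivity
  have hdeg2 : p.degree = 2 := by
    rw [degree_eq_natDegree (fun h => h2 (by simp [h]))]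
    exact_mod_cast le_antisymm hdeg (le_natDegree_of_ne_zero h2)
  obtain ⟨x, hx⟩ := hp.exists_eval_eq_zero (by rw [hdeg2]; decide)
  rw [eval_eq_sum_range' (n := 3) (by omega)] at hx
  simp only [Finset.sum_range_succ, Finset.sum_range_zero] at hx
  have hdiscrim := discrim_eq_sq_of_quadratic_eq_zero (a := p.coeff 2) (b := p.coeff 1)
    (c := p.coeff 0) (x := x) (by linear_combination hx)
  rw [discrim] at hdiscrim
  linarith [sq_nonneg (2 * p.coeff 2 * x + p.coeff 1)]

theorem Splits.derivative_of_real {p : ℝ[X]} (hp : p.Splits) : p.derivative.Splits := by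
  rw [splits_iff_card_roots] at hp ⊢
  have rolle := card_roots_le_derivative p
  have hdeg := natDegree_derivative_le p
  have hcard := card_roots' (derivative p)
  omega

theorem Splits.iterate_derivative_of_real {p : ℝ[X]} (hp : p.Splits) (k : ℕ) :
    (derivative^[k] p).Splits := by
  induction k with
  | zero => exact hp
  | succ k ih => rw [Function.iterate_succ_apply']; exact ih.derivative_of_real

/-- The weights are those of the coefficients `r, r + 1, r + 2` of `p` in the quadratic obtained
by differentiating `p` `r` times, reversing, and differentiating `m` more times. -/
theorem Splits.weighted_coeff_mul_coeff_le_sq {p : ℝ[X]} (hp : p.Splits) {r m : ℕ}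
    (hm : p.natDegree = m + 2 + r) :
    4 * ((m + 2).descFactorial m * (r.descFactorial r * p.coeff r)) *
        (m.descFactorial m * ((r + 2).descFactorial r * p.coeff (r + 2))) ≤
      ((m + 1).descFactorial m * ((r + 1).descFactorial r * p.coeff (r + 1))) ^ 2 := by
  set g := derivative^[r] p with hg
  have hgcoeff (i : ℕ) : g.coeff i = (i + r).descFactorial r * p.coeff (i + r) := by
    rw [hg, coeff_iterate_derivative, nsmul_eq_mul]
  have hgdeg : g.natDegree = m + 2 := by
    refine le_antisymm ((natDegree_iterate_derivative p r).trans (by omega))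
      (le_natDegree_of_ne_zero ?_)
    rw [hgcoeff, ← hm]
    exact mul_ne_zero (by exact_mod_cast (Nat.descFactorial_pos.mpr (by omega)).ne')
      (leadingCoeff_ne_zero.mpr (by rintro rfl; rw [natDegree_zero] at hm; omega))
  set q := derivative^[m] g.reverse with hq
  have hqcoeff (i : ℕ) (hi : i ≤ 2) :
      q.coeff i = (i + m).descFactorial m * g.coeff (2 - i) := by
    rw [hq, coeff_iterate_derivative, nsmul_eq_mul, coeff_reverse, hgdeg,
      revAt_le (show i + m ≤ m + 2 by omega), show m + 2 - (i + m) = 2 - i by omega]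
  have hqdeg : q.natDegree ≤ 2 :=
    (natDegree_iterate_derivative g.reverse m).trans (by have := reverse_natDegree_le g; omega)
  have key := ((hp.iterate_derivative_of_real r).reverse.iterate_derivative_of_real m
    ).four_mul_coeff_two_mul_coeff_zero_le hqdeg
  rw [hqcoeff 0 (by norm_num), hqcoeff 1 (by norm_num), hqcoeff 2 (by norm_num),
    hgcoeff, hgcoeff, hgcoeff] at key
  simpa only [Nat.sub_self, Nat.sub_zero, zero_add, show 2 - 1 = 1 from rfl, add_comm 1,
    add_comm 2] using key

theorem Splits.coeff_mul_coeff_le_sq {p : ℝ[X]} (hp : p.Splits) (r : ℕ) :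
    p.coeff r * p.coeff (r + 2) ≤ p.coeff (r + 1) ^ 2 := by
  rcases lt_or_ge p.natDegree (r + 2) with hlt | hge
  · rw [coeff_eq_zero_of_natDegree_lt hlt, mul_zero]
    positivity
  set m := p.natDegree - (r + 2)
  have key := hp.weighted_coeff_mul_coeff_le_sq (r := r) (m := m) (by omega)
  have hm : ((m + 1).descFactorial m : ℝ) ^ 2 ≤
      2 * ((m + 2).descFactorial m * m.descFactorial m) := by
    exact_mod_cast Nat.descFactorial_succ_sq_le m
  have hr : ((r + 1).descFactorial r : ℝ) ^ 2 ≤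
      2 * ((r + 2).descFactorial r * r.descFactorial r) := by
    exact_mod_cast Nat.descFactorial_succ_sq_le r
  set A : ℝ := (m + 1).descFactorial m * (r + 1).descFactorial r
  set B : ℝ := 4 * (((m + 2).descFactorial m * m.descFactorial m) *
    ((r + 2).descFactorial r * r.descFactorial r))
  have hA : 0 < A := by
    simp only [A]
    exact_mod_cast Nat.mul_pos (Nat.descFactorial_pos.mpr (by omega))
      (Nat.descFactorial_pos.mpr (by omega))
  have hAB : A ^ 2 ≤ B := by
    rw [mul_pow]
    nlinarith [mul_le_mul hm hr (by positivity) (by positivity)]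
  have hBA : B * (p.coeff r * p.coeff (r + 2)) ≤ A ^ 2 * p.coeff (r + 1) ^ 2 := by
    linear_combination key
  rcases le_or_gt (p.coeff r * p.coeff (r + 2)) 0 with hneg | hpos
  · exact hneg.trans (sq_nonneg _)
  · exact le_of_mul_le_mul_left ((mul_le_mul_of_nonneg_right hAB hpos.le).trans hBA)
      (by positivity)

theorem coeff_le_taylor_coeff {R : Type*} [CommSemiring R] [PartialOrder R] [IsOrderedRing R]
    {p : R[X]} {c : R} {k : ℕ} (hc : 0 ≤ c) (hp : ∀ i, k ≤ i → 0 ≤ p.coeff i) :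
    p.coeff k ≤ (taylor c p).coeff k := by
  rw [taylor_coeff, eval_eq_sum_range]
  have hterm (i : ℕ) : 0 ≤ (hasseDeriv k p).coeff i * c ^ i := by
    have := hp (i + k) (by omega)
    rw [hasseDeriv_coeff]
    positivity
  calc p.coeff k = (hasseDeriv k p).coeff 0 * c ^ 0 := by simp [hasseDeriv_coeff]
    _ ≤ _ := Finset.single_le_sum (fun i _ => hterm i) (by simp)

end Polynomial

namespace Multiset

section CommSemiring

variable {R : Type*} [CommSemiring R]

theorem esymm_cons_succ (a : R) (s : Multiset R) (k : ℕ) :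
    (a ::ₘ s).esymm (k + 1) = s.esymm (k + 1) + a * s.esymm k := by
  simp only [esymm, powersetCard_cons, map_add, sum_add, map_map, Function.comp_def, prod_cons,
    sum_map_mul_left]

theorem esymm_zero_cons (s : Multiset R) (k : ℕ) : ((0 : R) ::ₘ s).esymm k = s.esymm k := by
  cases k with
  | zero => simp [esymm, powersetCard_zero_left]
  | succ k => rw [esymm_cons_succ, zero_mul, add_zero]

theorem esymm_eq_zero_of_card_lt {s : Multiset R} {k : ℕ} (h : card s < k) : s.esymm k = 0 := by
  simp [esymm, powersetCard_eq_empty _ h]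

end CommSemiring

theorem prod_X_add_C_splits (s : Multiset ℝ) : (s.map fun r => X + C r).prod.Splits :=
  Splits.multisetProd fun f hf => by
    obtain ⟨r, -, rfl⟩ := mem_map.mp hf
    exact Splits.X_add_C r

theorem esymm_mul_esymm_le_sq (s : Multiset ℝ) (k : ℕ) :
    s.esymm k * s.esymm (k + 2) ≤ s.esymm (k + 1) ^ 2 := by
  rcases lt_or_ge (card s) (k + 2) with h | h
  · rw [esymm_eq_zero_of_card_lt h, mul_zero]
    positivity
  have := (prod_X_add_C_splits s).coeff_mul_coeff_le_sq (card s - (k + 2))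
  rwa [show card s - (k + 2) + 1 = card s - (k + 1) by omega,
    show card s - (k + 2) + 2 = card s - k by omega, prod_X_add_C_coeff _ (by omega),
    prod_X_add_C_coeff _ (by omega), prod_X_add_C_coeff _ (by omega),
    Nat.sub_sub_self h, Nat.sub_sub_self (by omega), Nat.sub_sub_self (by omega), mul_comm] at this

theorem esymm_le_esymm_map_add {s : Multiset ℝ} {c : ℝ} (hc : 0 ≤ c) {j : ℕ}
    (hs : ∀ r ≤ j, 0 ≤ s.esymm r) : s.esymm j ≤ (s.map (· + c)).esymm j := by
  rcases lt_or_ge (card s) j with h | h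
  · rw [esymm_eq_zero_of_card_lt h, esymm_eq_zero_of_card_lt (by simpa using h)]
  set P := (s.map fun r => X + C r).prod
  have hP : ((s.map (· + c)).map fun r => X + C r).prod = taylor c P := by
    rw [show taylor c P = taylorAlgHom c P from rfl, map_multiset_prod, map_map, map_map]
    refine congrArg _ (map_congr rfl fun r _ => ?_)
    show X + C (r + c) = taylor c (X + C r)
    rw [LinearMap.map_add, taylor_X, taylor_C, C_add]
    ring
  have hcoeff (i : ℕ) (hi : i ≤ card s) : P.coeff i = s.esymm (card s - i) :=
    prod_X_add_C_coeff s hi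
  have hdeg : P.natDegree = card s := by
    rw [natDegree_multiset_prod_of_monic _ fun f hf => by
      obtain ⟨r, -, rfl⟩ := mem_map.mp hf
      exact monic_X_add_C r]
    simp
  have := coeff_le_taylor_coeff (p := P) (k := card s - j) hc fun i hi => by
    rcases le_or_gt i (card s) with hi' | hi'
    · rw [hcoeff i hi']
      exact hs _ (by omega)
    · rw [coeff_eq_zero_of_natDegree_lt (hdeg ▸ hi')]
  rwa [← hP, hcoeff _ (by omega), prod_X_add_C_coeff _ (by simp), card_map,
    Nat.sub_sub_self h] at this

end Multiset

section ElementarySymmetric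

variable {n : ℕ}

theorem esymm_eq_multiset_esymm (k : ℕ) (lam : Fin n → ℝ) :
    esymm n k lam = (Finset.univ.val.map lam).esymm k :=
  (Finset.esymm_map_val lam Finset.univ k).symm

theorem esymm_zero (lam : Fin n → ℝ) : esymm n 0 lam = 1 := by
  simp [esymm]

theorem esymm_nonneg {lam : Fin n → ℝ} (h : ∀ x, 0 ≤ lam x) (k : ℕ) : 0 ≤ esymm n k lam :=
  Finset.sum_nonneg fun _ _ => Finset.prod_nonneg fun x _ => h x

theorem continuous_esymm (k : ℕ) : Continuous (esymm n k) :=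
  continuous_finsetSum _ fun _ _ => continuous_finsetProd _ fun x _ => continuous_apply x

theorem esymm_succ_eq_update_add (lam : Fin n → ℝ) (i : Fin n) (j : ℕ) :
    esymm n (j + 1) lam =
      esymm n (j + 1) (Function.update lam i 0) + lam i * esymm n j (Function.update lam i 0) := by
  have huniv : (Finset.univ : Finset (Fin n)).val = i ::ₘ (Finset.univ.erase i).val :=
    (Multiset.cons_erase (Finset.mem_univ_val i)).symm
  have hrest : (Finset.univ.erase i).val.map (Function.update lam i 0) =
      (Finset.univ.erase i).val.map lam :=
    Multiset.map_congr rfl fun x hx =>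
      Function.update_of_ne (Finset.ne_of_mem_erase (Finset.mem_def.mpr hx)) _ _
  rw [esymm_eq_multiset_esymm, esymm_eq_multiset_esymm, esymm_eq_multiset_esymm, huniv,
    Multiset.map_cons, Multiset.map_cons, Function.update_self, hrest, Multiset.esymm_cons_succ,
    Multiset.esymm_zero_cons, Multiset.esymm_zero_cons]

theorem esymm_mul_esymm_le_sq (lam : Fin n → ℝ) (k : ℕ) :
    esymm n k lam * esymm n (k + 2) lam ≤ esymm n (k + 1) lam ^ 2 := by
  simp only [esymm_eq_multiset_esymm, Multiset.esymm_mul_esymm_le_sq]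

end ElementarySymmetric

section GardingCone

variable {n : ℕ}

theorem GammaCone.add_const_mem {m : ℕ} {lam : Fin n → ℝ} (hlam : lam ∈ GammaCone n m) {c : ℝ}
    (hc : 0 ≤ c) : (fun x => lam x + c) ∈ GammaCone n m := by
  intro j hj hjm
  refine (hlam j hj hjm).trans_le ?_
  have hmap : Finset.univ.val.map (fun x => lam x + c) = (Finset.univ.val.map lam).map (· + c) :=
    (Multiset.map_map (· + c) lam _).symm
  rw [esymm_eq_multiset_esymm, esymm_eq_multiset_esymm, hmap]
  refine Multiset.esymm_le_esymm_map_add hc fun r hr => ?_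
  rw [← esymm_eq_multiset_esymm]
  rcases r.eq_zero_or_pos with rfl | hr0
  · rw [esymm_zero]; exact zero_le_one
  · exact (hlam r hr0 (hr.trans hjm)).le

theorem esymm_update_ne_zero {m : ℕ} {lam : Fin n → ℝ} (hlam : lam ∈ GammaCone n (m + 2))
    {i : Fin n} (hprev : 0 < esymm n m (Function.update lam i 0)) :
    esymm n (m + 1) (Function.update lam i 0) ≠ 0 := by
  intro hzero
  have htop : 0 < esymm n (m + 2) (Function.update lam i 0) := by
    simpa [esymm_succ_eq_update_add lam i (m + 1), hzero] using hlam (m + 2) (by omega) le_rfl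
  have := esymm_mul_esymm_le_sq (Function.update lam i 0) m
  rw [hzero] at this
  nlinarith [mul_pos hprev htop]

theorem esymm_update_pos {m : ℕ} {lam : Fin n → ℝ} (hlam : lam ∈ GammaCone n (m + 1)) (i : Fin n) :
    0 < esymm n m (Function.update lam i 0) := by
  induction m generalizing lam with
  | zero => rw [esymm_zero]; exact one_pos
  | succ m ih =>
    set f : ℝ → ℝ := fun s => esymm n (m + 1) (Function.update (fun x => lam x + s) i 0)
    have hf : Continuous f := (continuous_esymm _).comp (by fun_prop)
    have hne (s : ℝ) (hs : 0 ≤ s) : f s ≠ 0 := by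
      have hmem := GammaCone.add_const_mem hlam hs
      exact esymm_update_ne_zero hmem (ih fun j hj hjm => hmem j hj (by omega))
    set S := ∑ x, |lam x|
    have hS : 0 ≤ S := Finset.sum_nonneg fun x _ => abs_nonneg _
    have hfS : 0 ≤ f S := by
      refine esymm_nonneg (fun x => ?_) _
      rcases eq_or_ne x i with rfl | hx
      · simp
      · rw [Function.update_of_ne hx]
        have := Finset.single_le_sum (fun x _ => abs_nonneg (lam x)) (Finset.mem_univ x)
        linarith [neg_abs_le (lam x)]
    by_contra hnotpos
    have hf0 : f 0 ≤ 0 := by simpa only [f, add_zero] using not_lt.mp hnotpos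
    obtain ⟨s, hs, hs0⟩ := intermediate_value_Icc hS hf.continuousOn ⟨hf0, hfS⟩
    exact hne s hs.1 hs0

end GardingCone

theorem deleted_quotient_weak_general (n k : ℕ) (hk : 2 ≤ k)
    (lam : Fin n → ℝ) (hlam : lam ∈ GammaCone n (k - 1)) (i : Fin n) :
    0 < esymm n (k - 2) (Function.update lam i 0) ∧
    esymm n (k - 1) (Function.update lam i 0) * esymm n (k - 1) lam
      ≥ esymm n k lam * esymm n (k - 2) (Function.update lam i 0) ∧
    esymm n (k - 1) (Function.update lam i 0) / esymm n (k - 2) (Function.update lam i 0)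
      ≥ esymm n k lam / esymm n (k - 1) lam := by
  obtain ⟨m, rfl⟩ : ∃ m, k = m + 2 := ⟨k - 2, by omega⟩
  simp only [show m + 2 - 1 = m + 1 from rfl, show m + 2 - 2 = m from rfl] at hlam ⊢
  have hpos : 0 < esymm n m (Function.update lam i 0) := esymm_update_pos hlam i
  have hmain : esymm n (m + 1) (Function.update lam i 0) * esymm n (m + 1) lam
      ≥ esymm n (m + 2) lam * esymm n m (Function.update lam i 0) := by
    rw [esymm_succ_eq_update_add lam i m, esymm_succ_eq_update_add lam i (m + 1)]
    linear_combination esymm_mul_esymm_le_sq (Function.update lam i 0) m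
  refine ⟨hpos, hmain, ?_⟩
  rw [ge_iff_le, div_le_div_iff₀ (hlam (m + 1) (by omega) le_rfl) hpos]
  linarith

/-- Lemma 2.8, second part: for `2 ≤ k ≤ n` and `λ ∈ Γ_{k-1}`, for every index `i`
one has `σ_{k-2}(λ|i) > 0`, the inequality
`σ_{k-1}(λ|i) σ_{k-1}(λ) ≥ σ_k(λ) σ_{k-2}(λ|i)`, and equivalently
`σ_{k-1}(λ|i)/σ_{k-2}(λ|i) ≥ σ_k(λ)/σ_{k-1}(λ)`. -/
theorem deleted_quotient_weak (n k : ℕ) (hn : 2 ≤ n) (hk : 2 ≤ k) (hkn : k ≤ n)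
    (lam : Fin n → ℝ) (hlam : lam ∈ GammaCone n (k - 1)) (i : Fin n) :
    0 < esymm n (k - 2) (Function.update lam i 0) ∧
    esymm n (k - 1) (Function.update lam i 0) * esymm n (k - 1) lam
      ≥ esymm n k lam * esymm n (k - 2) (Function.update lam i 0) ∧
    esymm n (k - 1) (Function.update lam i 0) / esymm n (k - 2) (Function.update lam i 0)
      ≥ esymm n k lam / esymm n (k - 1) lam :=
  deleted_quotient_weak_general n k hk lam hlam i
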